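/- arXiv:2507.11311 — 3 statements merged into one kernel-verified Lean document; each statement's English description precedes it below -/
import Mathlib

section
/- Let J be a finite set with |J| = n, let m ≥ 1, and let (X₁*,…,X_m*) be any partition of J into m parts. Then there exists a refinement (Y₁,…,Y_k) of this partition into k = m + ⌈√(mn)⌉ parts (allowing empty parts) such that |Y_i| ≤ ⌈√(n/m)⌉ for every i ∈ [k]. -/
/-!
With `q = ⌈√(n/m)⌉`, cut each block `Xⱼ` into `⌊|Xⱼ|/q⌋ + 1` chunks of at most `q` consecutive
elements of an enumeration of `Xⱼ`. Since `∑ⱼ ⌊|Xⱼ|/q⌋ ≤ ⌊n/q⌋` and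
`n ≤ ⌈√(n/m)⌉ · ⌈√(mn)⌉`, this uses at most `m + ⌈√(mn)⌉` chunks; the remaining parts are empty.
-/

open Finset Function

theorem Finset.sum_nat_div_le {ι : Type*} (s : Finset ι) (f : ι → ℕ) (q : ℕ) :
    ∑ i ∈ s, f i / q ≤ (∑ i ∈ s, f i) / q := by
  rcases q.eq_zero_or_pos with rfl | hq
  · simp
  rw [Nat.le_div_iff_mul_le hq, sum_mul]
  exact sum_le_sum fun i _ => Nat.div_mul_le_self _ _

theorem Finset.exists_le_sum_eq {ι : Type*} [Fintype ι] [Nonempty ι] (c₀ : ι → ℕ) {k : ℕ}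
    (h : ∑ j, c₀ j ≤ k) : ∃ c : ι → ℕ, (∀ j, c₀ j ≤ c j) ∧ ∑ j, c j = k := by
  classical
  refine ⟨c₀ + Pi.single (Classical.arbitrary ι) (k - ∑ j, c₀ j), fun j => by simp, ?_⟩
  simp only [Pi.add_apply, sum_add_distrib, sum_pi_single', mem_univ, if_true]
  omega

theorem Nat.le_ceil_sqrt_div_mul_ceil_sqrt_mul {m : ℕ} (n : ℕ) (hm : 0 < m) :
    n ≤ ⌈√((n : ℝ) / m)⌉₊ * ⌈√((m : ℝ) * n)⌉₊ := by
  have hprod : √((n : ℝ) / m) * √((m : ℝ) * n) = n := by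
    rw [← Real.sqrt_mul (by positivity), show (n : ℝ) / m * (m * n) = n ^ 2 by field_simp]
    exact Real.sqrt_sq (by positivity)
  have : (n : ℝ) ≤ ⌈√((n : ℝ) / m)⌉₊ * ⌈√((m : ℝ) * n)⌉₊ :=
    calc (n : ℝ) = √((n : ℝ) / m) * √((m : ℝ) * n) := hprod.symm
      _ ≤ _ := by gcongr <;> exact Nat.le_ceil _
  exact_mod_cast this

section Refinement

variable {α : Type*} [DecidableEq α]

theorem Finset.exists_split_card_le (s : Finset α) {c q : ℕ} (hs : #s ≤ c * q) :
    ∃ Z : Fin c → Finset α, Pairwise (Disjoint on Z) ∧ univ.sup Z = s ∧ ∀ i, #(Z i) ≤ q := by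
  rcases q.eq_zero_or_pos with rfl | hq
  · refine ⟨fun _ => ∅, fun _ _ _ => disjoint_empty_left _, ?_, fun _ => by simp⟩
    rw [← bot_eq_empty, sup_bot, bot_eq_empty, eq_comm, ← card_eq_zero]
    simpa using hs
  set pos : α → ℕ := fun x => s.toList.idxOf x
  have hpos : ∀ x ∈ s, pos x < #s := fun x hx => by
    simpa [pos, ← length_toList] using List.idxOf_lt_length_iff.2 (mem_toList.2 hx)
  refine ⟨fun i => {x ∈ s | pos x / q = i}, ?_, ?_, ?_⟩
  · intro i j hij
    simp only [onFun, disjoint_left, mem_filter]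
    exact fun x hi hj => hij (Fin.ext (hi.2.symm.trans hj.2))
  · refine le_antisymm (Finset.sup_le fun i _ => filter_subset _ _) fun x hx => mem_sup.2 ?_
    have hlt : pos x / q < c :=
      Nat.div_lt_of_lt_mul ((hpos x hx).trans_le (hs.trans_eq (mul_comm _ _)))
    exact ⟨⟨pos x / q, hlt⟩, mem_univ _, mem_filter.2 ⟨hx, rfl⟩⟩
  · intro i
    calc #{x ∈ s | pos x / q = i} ≤ #(Ico (i * q) (i * q + q)) := by
          refine card_le_card_of_injOn pos (fun x hx => ?_) fun x hx y hy hxy => ?_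
          · obtain ⟨-, hxi⟩ := mem_filter.1 hx
            rw [coe_Ico, Set.mem_Ico, ← hxi]
            exact ⟨Nat.div_mul_le_self _ _, Nat.lt_div_mul_add hq⟩
          · exact (List.idxOf_inj (mem_toList.2 (mem_filter.1 hx).1)).1 hxy
      _ = q := by simp

variable {ι κ : Type*} [Fintype ι] [Fintype κ]

theorem exists_refinement_of_card_le_count_mul (X : ι → Finset α) (hX : Pairwise (Disjoint on X))
    {q : ℕ} (c : ι → ℕ) (hc : ∀ j, #(X j) ≤ c j * q) (hκ : Fintype.card κ = ∑ j, c j) :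
    ∃ Y : κ → Finset α, Pairwise (Disjoint on Y) ∧ univ.sup Y = univ.sup X ∧
      (∀ i, ∃ j, Y i ⊆ X j) ∧ ∀ i, #(Y i) ≤ q := by
  choose Z hZdisj hZsup hZcard using fun j => (X j).exists_split_card_le (hc j)
  have hZX : ∀ j i, Z j i ⊆ X j := fun j i => hZsup j ▸ le_sup (mem_univ i)
  set W : (Σ j, Fin (c j)) → Finset α := fun p => Z p.1 p.2
  have hW : Pairwise (Disjoint on W) := by
    rintro ⟨j, l⟩ ⟨j', l'⟩ hne
    by_cases hj : j = j'
    · subst hj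
      exact hZdisj j fun h => hne (congrArg (Sigma.mk j) h)
    · exact (hX hj).mono (hZX j l) (hZX j' l')
  let e : κ ≃ Σ j, Fin (c j) := Fintype.equivOfCardEq (by simp [hκ])
  refine ⟨W ∘ e, hW.comp_of_injective e.injective, ?_, fun i => ⟨_, hZX _ _⟩, fun i => hZcard _ _⟩
  calc univ.sup (W ∘ e) = (univ.map e.toEmbedding).sup W := (sup_map univ e.toEmbedding W).symm
    _ = univ.sup fun j => univ.sup (Z j) := by rw [map_univ_equiv, ← univ_sigma_univ, sup_sigma]
    _ = univ.sup X := sup_congr rfl fun j _ => hZsup j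

theorem exists_refinement_of_card_sup_le_mul [Nonempty ι] (X : ι → Finset α)
    (hX : Pairwise (Disjoint on X)) {q r : ℕ} (hn : #(univ.sup X) ≤ q * r)
    (hκ : Fintype.card ι + r ≤ Fintype.card κ) :
    ∃ Y : κ → Finset α, Pairwise (Disjoint on Y) ∧ univ.sup Y = univ.sup X ∧
      (∀ i, ∃ j, Y i ⊆ X j) ∧ ∀ i, #(Y i) ≤ q := by
  have hsum : ∑ j, #(X j) = #(univ.sup X) := by
    rw [sup_eq_biUnion, card_biUnion (hX.set_pairwise _)]
  have hc₀ : ∀ j, #(X j) ≤ (#(X j) / q + 1) * q := by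
    intro j
    rcases q.eq_zero_or_pos with rfl | hq
    · have : #(X j) ≤ #(univ.sup X) := card_le_card (le_sup (mem_univ j))
      simp only [zero_mul, nonpos_iff_eq_zero] at hn
      omega
    · rw [add_one_mul]
      exact (Nat.lt_div_mul_add hq).le
  have hcount : ∑ j, (#(X j) / q + 1) ≤ Fintype.card κ :=
    calc ∑ j, (#(X j) / q + 1) = ∑ j, #(X j) / q + Fintype.card ι := by
          simp [sum_add_distrib]
      _ ≤ #(univ.sup X) / q + Fintype.card ι := by
          gcongr
          exact hsum ▸ sum_nat_div_le _ _ _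
      _ ≤ r + Fintype.card ι := by gcongr; exact Nat.div_le_of_le_mul hn
      _ ≤ Fintype.card κ := by omega
  obtain ⟨c, hc₀c, hc⟩ := exists_le_sum_eq _ hcount
  exact exists_refinement_of_card_le_count_mul X hX c
    (fun j => (hc₀ j).trans (Nat.mul_le_mul_right q (hc₀c j))) hc.symm

end Refinement

/-- Let `|J| = n`, `m ≥ 1`, and `(X₁*, …, X_m*)` be any partition of `J` into
`m` parts.  Then there is a refinement `(Y₁, …, Y_k)` into
`k = m + ⌈√(mn)⌉` parts (empty parts allowed) with `|Yᵢ| ≤ ⌈√(n/m)⌉` for all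
`i ∈ [k]`. -/
theorem stmt4 {α : Type*} [DecidableEq α] (J : Finset α) (n m : ℕ)
    (hn : J.card = n) (hm : 0 < m) (X : Fin m → Finset α)
    (hdisj : ∀ i j, i ≠ j → Disjoint (X i) (X j))
    (hcover : Finset.univ.sup X = J) :
    ∃ Y : Fin (m + ⌈Real.sqrt ((m : ℝ) * n)⌉₊) → Finset α,
      (∀ i j, i ≠ j → Disjoint (Y i) (Y j)) ∧
      Finset.univ.sup Y = J ∧
      (∀ i, ∃ j, Y i ⊆ X j) ∧
      (∀ i, (Y i).card ≤ ⌈Real.sqrt ((n : ℝ) / m)⌉₊) := by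
  have : Nonempty (Fin m) := ⟨⟨0, hm⟩⟩
  have hJ : #(univ.sup X) ≤ ⌈√((n : ℝ) / m)⌉₊ * ⌈√((m : ℝ) * n)⌉₊ := by
    rw [hcover, hn]
    exact Nat.le_ceil_sqrt_div_mul_ceil_sqrt_mul n hm
  obtain ⟨Y, hYdisj, hYsup, hYX, hYcard⟩ :=
    exists_refinement_of_card_sup_le_mul (κ := Fin (m + ⌈√((m : ℝ) * n)⌉₊)) X
      (fun i j h => hdisj i j h) hJ (by simp)
  exact ⟨Y, fun i j h => hYdisj h, hYsup.trans hcover, hYX, hYcard⟩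
end

section
/- Let c : 2^J → ℝ≥0 be monotone subadditive with c(∅)=0, p : J → ℝ≥0, |J| = n, m ≥ 2 machines, and OPT the optimal makespan (minimum over m-partitions of max_i(c(Xᵢ)+p(Xᵢ))). The list scheduling of singleton batches has makespan at most (1/m)·Σ_{j∈J}(c({j})+p_j) + max_{j∈J}(c({j})+p_j) ≤ (n/m + 1)·OPT. -/
open Finset

/-- One step of greedy list scheduling: add processing time `t` to a machine of
currently minimum load. -/
noncomputable def greedyStep (m : ℕ) [NeZero m] (L : Fin m → ℝ) (t : ℝ) :
    Fin m → ℝ :=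
  Function.update L
    (Finset.exists_min_image Finset.univ L ⟨default, Finset.mem_univ _⟩).choose
    (L (Finset.exists_min_image Finset.univ L
        ⟨default, Finset.mem_univ _⟩).choose + t)

/-- Machine loads after greedily list-scheduling the batches with processing
times `T` (in order) on `m` machines. -/
noncomputable def greedyLoads (m : ℕ) [NeZero m] (T : List ℝ) : Fin m → ℝ :=
  T.foldl (greedyStep m) (fun _ => 0)

/-! Greedy list scheduling keeps every machine load within `B` of the average load,
as long as no job is longer than `B`: the job goes on a machine whose load is at most the
average. Since a single job `{j}` sits inside some block of an optimal partition,
monotonicity of `c` and nonnegativity of `p` give `c {j} + p j ≤ OPT`, so both the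
average `∑ (c {j} + p j) / m ≤ (n / m) · OPT` and the longest job `B ≤ OPT` are bounded. -/

section Greedy

variable (m : ℕ) [NeZero m]

lemma sum_greedyStep (L : Fin m → ℝ) (t : ℝ) :
    ∑ i, greedyStep m L t i = (∑ i, L i) + t := by
  unfold greedyStep
  rw [sum_update_of_mem (mem_univ _), sdiff_singleton_eq_erase, add_right_comm,
    add_sum_erase _ _ (mem_univ _)]

lemma greedyStep_le {L : Fin m → ℝ} {t B : ℝ} (ht : 0 ≤ t) (htB : t ≤ B)
    (hL : ∀ i, L i ≤ (∑ i, L i) / m + B) (i : Fin m) :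
    greedyStep m L t i ≤ ((∑ i, L i) + t) / m + B := by
  have hm : (0 : ℝ) < m := by exact_mod_cast Nat.pos_of_neZero m
  obtain ⟨-, hmin⟩ := (exists_min_image univ L ⟨default, mem_univ _⟩).choose_spec
  set i₀ := (exists_min_image univ L ⟨default, mem_univ _⟩).choose
  have hmin_le_avg : L i₀ ≤ (∑ i, L i) / m := by
    rw [le_div_iff₀ hm, mul_comm]
    simpa using card_nsmul_le_sum univ L _ fun i _ => hmin i (mem_univ i)
  have havg_mono : (∑ i, L i) / m ≤ ((∑ i, L i) + t) / m := by gcongr; linarith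
  unfold greedyStep
  rcases eq_or_ne i i₀ with rfl | hne
  · rw [Function.update_self]
    linarith
  · rw [Function.update_of_ne hne]
    linarith [hL i]

lemma foldl_greedyStep_le {B : ℝ} (T : List ℝ) (hT : ∀ t ∈ T, 0 ≤ t ∧ t ≤ B)
    (L : Fin m → ℝ) (hL : ∀ i, L i ≤ (∑ i, L i) / m + B) (i : Fin m) :
    T.foldl (greedyStep m) L i ≤ ((∑ i, L i) + T.sum) / m + B := by
  induction T generalizing L with
  | nil => simpa using hL i
  | cons t T ih =>
    obtain ⟨ht, htB⟩ := hT t List.mem_cons_self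
    have hstep := ih (fun s hs => hT s (List.mem_cons_of_mem _ hs)) (greedyStep m L t)
      (by simpa only [sum_greedyStep] using greedyStep_le m ht htB hL)
    simpa only [List.foldl_cons, sum_greedyStep, List.sum_cons, add_assoc] using hstep

lemma greedyLoads_le {B : ℝ} (hB : 0 ≤ B) (T : List ℝ) (hT : ∀ t ∈ T, 0 ≤ t ∧ t ≤ B)
    (i : Fin m) : greedyLoads m T i ≤ T.sum / m + B := by
  simpa [greedyLoads] using foldl_greedyStep_le m T hT (fun _ => 0) (by simpa using hB) i

end Greedy

lemma le_makespan_of_mem {α ι : Type*} [Fintype ι] [DecidableEq α] {c : Finset α → ℝ}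
    {p : α → ℝ} (hp : ∀ j, 0 ≤ p j) (hmono : ∀ X Y : Finset α, X ⊆ Y → c X ≤ c Y)
    (Y : ι → Finset α) (hne : (univ : Finset ι).Nonempty) {j : α} (hj : j ∈ univ.sup Y) :
    c {j} + p j ≤ univ.sup' hne (fun i => c (Y i) + ∑ k ∈ Y i, p k) := by
  obtain ⟨i, -, hji⟩ := mem_sup.mp hj
  calc c {j} + p j ≤ c (Y i) + ∑ k ∈ Y i, p k :=
        add_le_add (hmono _ _ (singleton_subset_iff.mpr hji)) (single_le_sum (fun k _ => hp k) hji)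
    _ ≤ _ := le_sup' (fun i => c (Y i) + ∑ k ∈ Y i, p k) (mem_univ i)

/-- With `c` monotone subadditive, `c ∅ = 0`, `|J| = n`, `m ≥ 2` machines and
`OPT` the optimal makespan (minimum over `m`-partitions of
`maxᵢ (c(Xᵢ)+p(Xᵢ))`), list scheduling of the singleton batches has makespan
at most `(1/m)·∑_{j∈J} (c({j})+p_j) + max_{j∈J} (c({j})+p_j) ≤ (n/m+1)·OPT`. -/
theorem stmt8 {α : Type*} [DecidableEq α] (J : Finset α) (hJ : J.Nonempty)
    (n m : ℕ) (hn : J.card = n) (hm : 2 ≤ m) [NeZero m]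
    (c : Finset α → ℝ) (p : α → ℝ)
    (hc : ∀ S, 0 ≤ c S) (hp : ∀ j, 0 ≤ p j)
    (hmono : ∀ X Y : Finset α, X ⊆ Y → c X ≤ c Y)
    (OPT : ℝ)
    (hOPTex : ∃ Y : Fin m → Finset α,
      (∀ i j, i ≠ j → Disjoint (Y i) (Y j)) ∧ Finset.univ.sup Y = J ∧
      OPT = Finset.univ.sup' ⟨⟨0, by omega⟩, Finset.mem_univ _⟩
        (fun i => c (Y i) + ∑ j ∈ Y i, p j)) :
    Finset.univ.sup' ⟨default, Finset.mem_univ _⟩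
        (greedyLoads m (J.toList.map fun j => c {j} + p j)) ≤
      (∑ j ∈ J, (c {j} + p j)) / m + J.sup' hJ (fun j => c {j} + p j) ∧
    (∑ j ∈ J, (c {j} + p j)) / m + J.sup' hJ (fun j => c {j} + p j) ≤
      ((n : ℝ) / m + 1) * OPT := by
  set B := J.sup' hJ fun j => c {j} + p j
  have hjob_nonneg : ∀ j, 0 ≤ c {j} + p j := fun j => add_nonneg (hc _) (hp j)
  have hjob_le_B : ∀ j ∈ J, c {j} + p j ≤ B := fun j hj => le_sup' (fun j => c {j} + p j) hj
  obtain ⟨Y, -, hcover, hOPT⟩ := hOPTex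
  have hjob_le_OPT : ∀ j ∈ J, c {j} + p j ≤ OPT := fun j hj =>
    hOPT ▸ le_makespan_of_mem hp hmono Y _ (hcover ▸ hj)
  refine ⟨sup'_le _ _ fun i _ => ?_, ?_⟩
  · rw [← sum_map_toList J]
    refine greedyLoads_le m ((hjob_nonneg _).trans (hjob_le_B _ hJ.choose_spec)) _ ?_ i
    simp only [List.mem_map, mem_toList]
    rintro _ ⟨j, hj, rfl⟩
    exact ⟨hjob_nonneg j, hjob_le_B j hj⟩
  · have hsum : ∑ j ∈ J, (c {j} + p j) ≤ n * OPT := by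
      simpa [hn] using sum_le_sum hjob_le_OPT
    rw [add_mul, one_mul, div_mul_eq_mul_div]
    gcongr
    exact sup'_le _ _ hjob_le_OPT
end

section
/- Let m ≥ 2, k = ⌊√m⌋, and let (X₁*,…,X_m*) be an optimal m-partition of J with OPT = max_i(c(Xᵢ*)+p(Xᵢ*)). If (X₁,…,X_k) is a k-partition of J minimizing max_{i∈[k]} c(Xᵢ), then max_{i∈[k]} c(Xᵢ) ≤ ⌈m/k⌉ · OPT. -/
/-!
Send the `j`-th optimal block to group `⌊j / q⌋`, where `q = ⌈m / k⌉`; since `m ≤ k q` this gives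
`k` groups of at most `q` blocks each, i.e. a `k`-partition of `J`. By subadditivity each group
costs at most `q` times the largest `c(Xⱼ*)`, which is at most `OPT`, and the optimal
`k`-partition is no worse than this one.
-/

open Finset Function

section Subadditive

variable {α ι κ : Type*} [DecidableEq α] {c : Finset α → NNReal}

theorem le_sum_of_subadditive_of_pairwiseDisjoint
    (hsub : ∀ X Y, Disjoint X Y → c (X ∪ Y) ≤ c X + c Y) (hempty : c ∅ = 0)
    {s : Finset ι} {f : ι → Finset α} (hf : (s : Set ι).PairwiseDisjoint f) :
    c (s.sup f) ≤ ∑ i ∈ s, c (f i) := by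
  induction s using Finset.cons_induction with
  | empty => simp [hempty]
  | cons a s ha ih =>
    rw [coe_cons] at hf
    have hdisj : Disjoint (f a) (s.sup f) :=
      Finset.disjoint_sup_right.2 fun j hj =>
        hf (Set.mem_insert _ _) (Set.mem_insert_of_mem _ hj) (ne_of_mem_of_not_mem hj ha).symm
    calc c ((s.cons a ha).sup f) ≤ c (f a) + c (s.sup f) := by
          rw [sup_cons]; exact hsub _ _ hdisj
      _ ≤ c (f a) + ∑ i ∈ s, c (f i) := by gcongr; exact ih (hf.subset (Set.subset_insert _ _))
      _ = ∑ i ∈ s.cons a ha, c (f i) := by rw [sum_cons]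

variable [Fintype ι] [DecidableEq κ]

def fiberSup (g : ι → κ) (Y : ι → Finset α) (i : κ) : Finset α :=
  ({j | g j = i} : Finset ι).sup Y

theorem pairwise_disjoint_fiberSup {Y : ι → Finset α} (hY : Pairwise (Disjoint on Y))
    (g : ι → κ) : Pairwise (Disjoint on (fiberSup g Y)) := fun i i' hii' => by
  simp only [onFun, fiberSup, Finset.disjoint_sup_left, Finset.disjoint_sup_right, mem_filter,
    mem_univ, true_and]
  rintro j rfl j' rfl
  exact hY fun h => hii' (congrArg g h)

theorem sup_fiberSup [Fintype κ] (g : ι → κ) (Y : ι → Finset α) :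
    univ.sup (fiberSup g Y) = univ.sup Y := by
  classical
  unfold fiberSup
  rw [← sup_biUnion, biUnion_filter_eq_of_maps_to fun _ _ => mem_univ _]

theorem subadditive_apply_fiberSup_le (hsub : ∀ X Y, Disjoint X Y → c (X ∪ Y) ≤ c X + c Y)
    (hempty : c ∅ = 0) {Y : ι → Finset α} (hY : Pairwise (Disjoint on Y)) {g : ι → κ} {q : ℕ}
    (hg : ∀ i, #{j | g j = i} ≤ q) {B : NNReal} (hB : ∀ j, c (Y j) ≤ B) (i : κ) :
    c (fiberSup g Y i) ≤ q * B :=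
  calc c (fiberSup g Y i) ≤ ∑ j ∈ {j | g j = i}, c (Y j) :=
        le_sum_of_subadditive_of_pairwiseDisjoint hsub hempty fun _ _ _ _ h => hY h
    _ ≤ #{j | g j = i} • B := sum_le_card_nsmul _ _ _ fun j _ => hB j
    _ ≤ q * B := by rw [nsmul_eq_mul]; gcongr; exact_mod_cast hg i

end Subadditive

theorem Fin.exists_map_card_fiber_le {m k q : ℕ} (h : m ≤ k * q) :
    ∃ g : Fin m → Fin k, ∀ i, #{j | g j = i} ≤ q := by
  refine ⟨fun j => ⟨j / q, Nat.div_lt_of_lt_mul (j.2.trans_le (by rwa [mul_comm]))⟩,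
    fun i => ?_⟩
  rcases Nat.eq_zero_or_pos q with rfl | hq
  · obtain rfl : m = 0 := by simpa using h
    simp
  calc _ ≤ #(Ico (i * q) (i * q + q)) := by
        refine card_le_card_of_injOn Fin.val (fun j hj => ?_) Fin.val_injective.injOn
        simp only [coe_filter, mem_univ, true_and, Set.mem_ofPred_eq, Fin.ext_iff,
          Nat.div_eq_iff hq] at hj
        rw [mem_coe, mem_Ico]; omega
    _ = q := by simp

theorem Nat.le_mul_ceil_div {m k : ℕ} (hk : 0 < k) : m ≤ k * ⌈(m : ℝ) / k⌉₊ := by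
  have := Nat.le_ceil ((m : ℝ) / k)
  rw [div_le_iff₀ (by positivity)] at this
  exact_mod_cast (by linarith : (m : ℝ) ≤ k * ⌈(m : ℝ) / k⌉₊)

/-- Let `m ≥ 2`, `k = ⌊√m⌋`, and `(X₁*, …, X_m*)` a partition of `J` with
makespan `OPT = maxᵢ (c(Xᵢ*) + p(Xᵢ*))`.  If `(X₁, …, X_k)` is a `k`-partition
of `J` minimizing `max_{i∈[k]} c(Xᵢ)`, then
`max_{i∈[k]} c(Xᵢ) ≤ ⌈m/k⌉ · OPT`. -/
theorem stmt9 {α : Type*} [DecidableEq α] (J : Finset α)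
    (c : Finset α → NNReal) (p : α → NNReal)
    (hsub : ∀ X Y : Finset α, Disjoint X Y → c (X ∪ Y) ≤ c X + c Y)
    (hempty : c ∅ = 0)
    (m : ℕ) (hm : 2 ≤ m)
    (Xstar : Fin m → Finset α)
    (hdisjstar : ∀ i j, i ≠ j → Disjoint (Xstar i) (Xstar j))
    (hcoverstar : Finset.univ.sup Xstar = J)
    (OPT : NNReal)
    (hOPT : OPT = Finset.univ.sup' ⟨⟨0, by omega⟩, Finset.mem_univ _⟩
        (fun i => c (Xstar i) + ∑ j ∈ Xstar i, p j))
    (X : Fin (Nat.sqrt m) → Finset α)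
    (hminX : ∀ X' : Fin (Nat.sqrt m) → Finset α,
      (∀ i j, i ≠ j → Disjoint (X' i) (X' j)) → Finset.univ.sup X' = J →
      Finset.univ.sup'
          ⟨⟨0, Nat.sqrt_pos.mpr (by omega)⟩, Finset.mem_univ _⟩
          (fun i => c (X i)) ≤
        Finset.univ.sup'
          ⟨⟨0, Nat.sqrt_pos.mpr (by omega)⟩, Finset.mem_univ _⟩
          (fun i => c (X' i))) :
    Finset.univ.sup' ⟨⟨0, Nat.sqrt_pos.mpr (by omega)⟩, Finset.mem_univ _⟩
        (fun i => c (X i)) ≤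
      (⌈(m : ℝ) / (Nat.sqrt m : ℝ)⌉₊ : NNReal) * OPT := by
  obtain ⟨g, hg⟩ := Fin.exists_map_card_fiber_le
    (Nat.le_mul_ceil_div (Nat.sqrt_pos.mpr (by omega : 0 < m)))
  have hY : Pairwise (Disjoint on Xstar) := fun i j => hdisjstar i j
  have hOPT_ge (j : Fin m) : c (Xstar j) ≤ OPT :=
    hOPT ▸ le_self_add.trans (le_sup' (fun i => c (Xstar i) + ∑ a ∈ Xstar i, p a) (mem_univ j))
  refine (hminX (fiberSup g Xstar) (fun _ _ h => pairwise_disjoint_fiberSup hY g h)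
    (by rw [sup_fiberSup, hcoverstar])).trans ?_
  exact sup'_le _ _ fun i _ => subadditive_apply_fiberSup_le hsub hempty hY hg hOPT_ge i
end
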